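/- arXiv:1602.03005 — 3 statements merged into one kernel-verified Lean document; each statement's English description precedes it below -/
import Mathlib

section
/- The definite integral ∫_{-1/2}^{1/2} arcsin((1-2x)/√5) dx equals arctan(2) + 1/2 - √5/2. -/
/-!
The substitution `u = (1 - 2x)/√5` turns the integral into `(√5/2) ∫₀^{2/√5} arcsin u du`,
which is evaluated with the antiderivative `u arcsin u + √(1 - u²)`; finally
`arctan 2 = arcsin (2/√5)`.
-/

open Real Set intervalIntegral

theorem hasDerivAt_mul_arcsin_add_sqrt {x : ℝ} (hx : x ∈ Ioo (-1 : ℝ) 1) :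
    HasDerivAt (fun y => y * arcsin y + √(1 - y ^ 2)) (arcsin x) x := by
  have hpos : 0 < 1 - x ^ 2 := by nlinarith [hx.1, hx.2]
  have hmul : HasDerivAt (fun y => y * arcsin y) (1 * arcsin x + x * (1 / √(1 - x ^ 2))) x :=
    (hasDerivAt_id' x).mul (hasDerivAt_arcsin hx.1.ne' hx.2.ne)
  have hsqrt : HasDerivAt (fun y => √(1 - y ^ 2)) (-(2 * x) / (2 * √(1 - x ^ 2))) x := by
    simpa using ((hasDerivAt_pow 2 x).const_sub 1).sqrt hpos.ne'
  exact (hmul.add hsqrt).congr_deriv (by ring)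

theorem integral_arcsin_of_le {a b : ℝ} (ha : -1 ≤ a) (hab : a ≤ b) (hb : b ≤ 1) :
    ∫ x in a..b, arcsin x = (b * arcsin b + √(1 - b ^ 2)) - (a * arcsin a + √(1 - a ^ 2)) :=
  integral_eq_sub_of_hasDerivAt_of_le hab (by fun_prop)
    (fun x hx => hasDerivAt_mul_arcsin_add_sqrt ⟨ha.trans_lt hx.1, hx.2.trans_le hb⟩)
    (continuous_arcsin.intervalIntegrable a b)

theorem arctan_two : arctan 2 = arcsin (2 / √5) := by
  rw [arctan_eq_arcsin]; norm_num

theorem integral_I1 :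
    ∫ x in (-(1:ℝ)/2)..(1/2), Real.arcsin ((1 - 2*x) / Real.sqrt 5)
      = Real.arctan 2 + 1/2 - Real.sqrt 5 / 2 := by
  have hsqrt5_pos : (0 : ℝ) < √5 := by positivity
  have hsqrt5_sq : √5 ^ 2 = 5 := sq_sqrt (by norm_num)
  have hsubst : ∫ x in (-(1:ℝ)/2)..(1/2), arcsin ((1 - 2*x) / √5)
      = √5 / 2 * ∫ x in (0 : ℝ)..(2 / √5), arcsin x := by
    simp only [fun x : ℝ => show (1 - 2 * x) / √5 = 1 / √5 - 2 / √5 * x by ring]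
    rw [integral_comp_sub_mul arcsin (by positivity), smul_eq_mul, inv_div]
    congr 2 <;> ring
  have hb : 2 / √5 ≤ 1 := by
    rw [div_le_one hsqrt5_pos]; nlinarith
  rw [hsubst, integral_arcsin_of_le (by norm_num) (by positivity) hb, arctan_two]
  have hsqrt : √(1 - (2 / √5) ^ 2) = 1 / √5 := by
    rw [show 1 - (2 / √5) ^ 2 = (1 / √5) ^ 2 by rw [div_pow, div_pow, hsqrt5_sq]; norm_num,
      sqrt_sq (by positivity)]
  rw [hsqrt]
  field_simp
  norm_num
end

section
/- The definite integral ∫_{-1/2}^{1/2} (arcsin((1-2x)/√5) + arcsin((1+2x)/√5)) dx equals 2·arctan(1/3) + π/2 + 1 - √5. -/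
/-! Substituting `u = 1 ± 2x` turns each summand into `½ ∫₀² arcsin (u / √5) du`, and
`u ↦ u arcsin (u / a) + √(a² - u²)` is an antiderivative of `arcsin (u / a)` on `[-a, a]`.
The value `arcsin (2 / √5) = arctan 2 = arctan (1/3) + π/4` puts the result in the stated form. -/

open Real intervalIntegral Set

theorem sqrt_one_sub_div_sq {a : ℝ} (ha : 0 < a) (u : ℝ) :
    √(1 - (u / a) ^ 2) = √(a ^ 2 - u ^ 2) / a := by
  rw [← sqrt_sq ha.le, ← sqrt_div' _ (sq_nonneg a), sqrt_sq ha.le]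
  congr 1
  field_simp

theorem hasDerivAt_mul_arcsin_div_add_sqrt {a u : ℝ} (hu : |u| < a) :
    HasDerivAt (fun u => u * arcsin (u / a) + √(a ^ 2 - u ^ 2)) (arcsin (u / a)) u := by
  have ha : 0 < a := (abs_nonneg u).trans_lt hu
  obtain ⟨hlo, hhi⟩ := abs_lt.mp hu
  have hpos : 0 < a ^ 2 - u ^ 2 := by nlinarith
  have harcsin : HasDerivAt (fun u => arcsin (u / a)) (1 / √(a ^ 2 - u ^ 2)) u := by
    refine ((hasDerivAt_arcsin (x := u / a) ?_ ?_).comp u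
      ((hasDerivAt_id u).div_const a)).congr_deriv ?_
    · rw [ne_eq, div_eq_iff ha.ne']; linarith
    · rw [ne_eq, div_eq_iff ha.ne']; linarith
    · rw [sqrt_one_sub_div_sq ha]
      field_simp
  have hsqrt : HasDerivAt (fun u => √(a ^ 2 - u ^ 2)) (-u / √(a ^ 2 - u ^ 2)) u :=
    (((hasDerivAt_pow 2 u).const_sub (a ^ 2)).sqrt hpos.ne').congr_deriv (by field_simp; ring)
  refine (((hasDerivAt_id u).mul harcsin).add hsqrt).congr_deriv ?_
  field_simp
  simp

theorem integral_arcsin_div {a b c : ℝ} (hb : |b| ≤ a) (hc : |c| ≤ a) :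
    ∫ u in b..c, arcsin (u / a) =
      (c * arcsin (c / a) + √(a ^ 2 - c ^ 2)) - (b * arcsin (b / a) + √(a ^ 2 - b ^ 2)) := by
  refine integral_eq_sub_of_hasDeriv_right (f := fun u => u * arcsin (u / a) + √(a ^ 2 - u ^ 2))
    (by fun_prop) (fun u hu => ?_) (Continuous.intervalIntegrable (by fun_prop) _ _)
  rw [abs_le] at hb hc
  refine (hasDerivAt_mul_arcsin_div_add_sqrt (abs_lt.mpr ⟨?_, ?_⟩)).hasDerivWithinAt
  · exact (le_min hb.1 hc.1).trans_lt hu.1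
  · exact hu.2.trans_le (max_le hb.2 hc.2)

theorem integral_comp_sub_mul_add_comp_add_mul {f : ℝ → ℝ} (hf : Continuous f) {c : ℝ}
    (hc : c ≠ 0) (d r : ℝ) :
    ∫ x in -r..r, (f (d - c * x) + f (d + c * x)) =
      2 * c⁻¹ * ∫ u in d - c * r..d + c * r, f u := by
  rw [integral_add (by apply Continuous.intervalIntegrable; fun_prop)
      (by apply Continuous.intervalIntegrable; fun_prop),
    integral_comp_sub_mul f hc, integral_comp_add_mul f hc]
  simp only [mul_neg, sub_neg_eq_add, ← sub_eq_add_neg, smul_eq_mul]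
  ring

theorem arcsin_two_div_sqrt_five : arcsin (2 / √5) = arctan (1 / 3) + π / 4 := by
  rw [← arctan_one, arctan_add (by norm_num), arctan_eq_arcsin]
  norm_num

theorem integral_sum :
    ∫ x in (-(1:ℝ)/2)..(1/2),
        (Real.arcsin ((1 - 2*x) / Real.sqrt 5) + Real.arcsin ((1 + 2*x) / Real.sqrt 5))
      = 2 * Real.arctan (1/3) + Real.pi / 2 + 1 - Real.sqrt 5 := by
  rw [neg_div, integral_comp_sub_mul_add_comp_add_mul (f := fun u => arcsin (u / √5))
    (by fun_prop) two_ne_zero, integral_arcsin_div]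
  · norm_num [arcsin_two_div_sqrt_five]
    ring
  · norm_num
  · norm_num [le_sqrt]
end

section
/- Let α : ℝ → ℝ be defined by α(x) = arcsin((1-2x)/√5) + arcsin((1+2x)/√5) + 2·arctan(2) - π. Then α(x) ≥ 0 for every x in the closed interval [-1/2, 1/2]. -/
open Real

set_option maxHeartbeats 1000000 in
theorem alpha_nonneg (α : ℝ → ℝ)
    (hα : ∀ x, α x = Real.arcsin ((1 - 2*x) / Real.sqrt 5) + Real.arcsin ((1 + 2*x) / Real.sqrt 5)
        + 2 * Real.arctan 2 - Real.pi) :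
    ∀ x ∈ Set.Icc (-(1:ℝ)/2) (1/2), 0 ≤ α x := by
  intro x hx
  obtain ⟨hx1, hx2⟩ := hx
  rw [hα]
  have hs0 : (0:ℝ) < Real.sqrt 5 := Real.sqrt_pos.mpr (by norm_num)
  have hs2 : Real.sqrt 5 ^ 2 = 5 := Real.sq_sqrt (by norm_num)
  set s := Real.sqrt 5 with hs
  set a := (1 - 2*x) / s with hadef
  set b := (1 + 2*x) / s with hbdef
  have harct : Real.arctan (1/2) = π/2 - Real.arctan 2 := by
    have := Real.arctan_inv_of_pos (show (0:ℝ) < 2 by norm_num)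
    rw [show (1/2 : ℝ) = (2:ℝ)⁻¹ by norm_num]
    exact this
  set c : ℝ := 2 * Real.arctan (1/2) with hc
  have hu0 : 0 ≤ Real.arctan (1/2) := by
    rw [← Real.arctan_zero]; exact Real.arctan_strictMono.monotone (by norm_num)
  have hu4 : Real.arctan (1/2) ≤ π/4 := by
    rw [← Real.arctan_one]; exact Real.arctan_strictMono.monotone (by norm_num)
  have hsq : Real.sqrt (1 + (1/2:ℝ)^2) = s/2 := by
    rw [show (1 + (1/2:ℝ)^2) = (s / 2)^2 by rw [show (s/2)^2 = s^2/4 by ring, hs2]; norm_num]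
    exact Real.sqrt_sq (by positivity)
  have hsinu : Real.sin (Real.arctan (1/2)) = 1/s := by
    rw [Real.sin_arctan, hsq]; field_simp
  have hcosu : Real.cos (Real.arctan (1/2)) = 2/s := by
    rw [Real.cos_arctan, hsq]; field_simp
  have hsinc : Real.sin c = 4/5 := by
    rw [hc, Real.sin_two_mul, hsinu, hcosu]
    field_simp
    nlinarith [hs2]
  have hcosc : Real.cos c = 3/5 := by
    rw [hc, Real.cos_two_mul, hcosu]
    field_simp
    nlinarith [hs2]
  have ha0 : 0 ≤ a := by
    apply div_nonneg _ hs0.le; linarith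
  have ha1 : a ≤ 1 := by
    rw [hadef, div_le_one hs0]
    nlinarith [hs2, hs0]
  have harc_a_nonneg : 0 ≤ Real.arcsin a := Real.arcsin_nonneg.mpr ha0
  have harc_a_le : Real.arcsin a ≤ π/2 := Real.arcsin_le_pi_div_two a
  set t : ℝ := c - Real.arcsin a with ht
  have ht1 : -(π/2) ≤ t := by rw [ht, hc]; linarith
  have ht2 : t ≤ π/2 := by rw [ht, hc]; linarith
  have ha2 : a^2 = (1-2*x)^2/5 := by rw [hadef, div_pow, hs2]
  have h1a2 : (0:ℝ) ≤ 1 - a^2 := by rw [ha2]; nlinarith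
  set w := Real.sqrt (1 - a^2) with hw
  have hw0 : 0 ≤ w := Real.sqrt_nonneg _
  have hw2 : w^2 = 1 - a^2 := Real.sq_sqrt h1a2
  have hsint : Real.sin t = 4/5 * w - 3/5 * a := by
    rw [ht, Real.sin_sub, hsinc, hcosc, Real.sin_arcsin (by linarith) ha1,
      Real.cos_arcsin, ← hw]
  have hws : w^2 * s^2 = 5 - (1-2*x)^2 := by
    rw [hw2, ha2, hs2]; ring
  have hp : (w*s)^2 = 5 - (1-2*x)^2 := by rw [mul_pow]; exact hws
  have hwsnn : 0 ≤ w*s := mul_nonneg hw0 hs0.le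
  have hsum : 0 < 8 + 4*x + 4*(w*s) := by linarith
  have hdiff : 0 ≤ 8 + 4*x - 4*(w*s) := by
    nlinarith [hp, hsum, sq_nonneg x]
  have key : 4*w ≤ (8 + 4*x)/s := by
    rw [le_div_iff₀ hs0]; linarith
  have hb1 : Real.sin t ≤ b := by
    rw [hsint, hbdef]
    have heq : (1+2*x)/s - (4/5*w - 3/5*a) = ((8+4*x)/s - 4*w)/5 := by
      rw [hadef]; field_simp; ring
    linarith [heq, key]
  have harcb : t ≤ Real.arcsin b := by
    calc t = Real.arcsin (Real.sin t) := (Real.arcsin_sin ht1 ht2).symm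
    _ ≤ Real.arcsin b := Real.monotone_arcsin hb1
  have hge : Real.arcsin a + Real.arcsin b ≥ c := by rw [ht] at harcb; linarith
  rw [hc, harct] at hge
  linarith
end
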